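/- Let 0 < a < 1. There exist a constant C > 0 and x₀ > 2 such that for all real x ≥ x₀: ∑_{k=1}^{⌊x^a⌋} √(Li(x)/φ(k)) ≤ C · x^{(a+1)/2}. -/

import Mathlib

/-!
Since `Li(x) ≤ 2x`, it suffices that `∑_{k ≤ N} φ(k)^{-1/2} ≤ 2e√N`. From `φ(k) ≤ k` we get
`φ(k)^{-1/2} ≤ (k/φ(k)) / √k`, and Euler's product gives
`k/φ(k) = ∏_{p ∣ k} (1 + 1/(p-1)) = ∑_{T ⊆ primeFactors k} ∏_{p ∈ T} 1/(p-1)`.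
Swapping the sums, a set `T` of primes only sees the multiples `k ≤ N` of `d = ∏_{p ∈ T} p`,
which contribute `∑ k^{-1/2} ≤ 2√N/d`. Hence the total is at most
`2√N ∏_{2 ≤ n ≤ N} (1 + 1/((n-1)n)) ≤ 2√N · exp (∑ 1/((n-1)n)) ≤ 2e√N` by telescoping.
-/

open MeasureTheory

open Finset Real Nat

lemma sum_Icc_one_div_sqrt_le (N : ℕ) : ∑ m ∈ Icc 1 N, 1 / √(m : ℝ) ≤ 2 * √N := by
  induction N with
  | zero => simp
  | succ N ih =>
    rw [sum_Icc_succ_top (by omega), Nat.cast_succ]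
    have hpos : 0 < √((N : ℝ) + 1) := sqrt_pos.2 (by positivity)
    have hsq : √((N : ℝ) + 1) * √((N : ℝ) + 1) = N + 1 := mul_self_sqrt (by positivity)
    have hamgm : √(N : ℝ) * √((N : ℝ) + 1) ≤ N + 1 / 2 := by
      rw [← sqrt_mul (Nat.cast_nonneg N), sqrt_le_left (by positivity)]
      nlinarith
    have hstep : 1 / √((N : ℝ) + 1) ≤ 2 * √((N : ℝ) + 1) - 2 * √N := by
      rw [div_le_iff₀ hpos]; nlinarith
    linarith

lemma sum_Icc_one_div_sub_one_mul_self_le_one (N : ℕ) :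
    ∑ n ∈ Icc 2 N, 1 / (((n : ℝ) - 1) * n) ≤ 1 := by
  suffices h : ∀ N : ℕ, ∑ n ∈ Icc 2 (N + 1), 1 / (((n : ℝ) - 1) * n) = 1 - 1 / (N + 1) by
    rcases N with _ | N
    · simp
    · rw [h]; linarith [show 0 ≤ 1 / ((N : ℝ) + 1) by positivity]
  intro N
  induction N with
  | zero => norm_num
  | succ N ih =>
    rw [sum_Icc_succ_top (by omega), ih]
    push_cast
    field_simp
    ring

lemma Icc_filter_dvd_eq_image {d : ℕ} (hd : 0 < d) (N : ℕ) :
    {k ∈ Icc 1 N | d ∣ k} = (Icc 1 (N / d)).image (d * ·) := by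
  ext k
  simp only [mem_filter, mem_Icc, mem_image]
  constructor
  · rintro ⟨⟨hk1, hkN⟩, m, rfl⟩
    exact ⟨m, ⟨Nat.pos_of_mul_pos_left hk1, (Nat.le_div_iff_mul_le hd).2 (by linarith)⟩, rfl⟩
  · rintro ⟨m, ⟨hm1, hmN⟩, rfl⟩
    refine ⟨⟨Nat.mul_pos hd hm1, ?_⟩, dvd_mul_right d m⟩
    rw [mul_comm]
    exact Nat.mul_le_of_le_div d m N hmN

lemma sum_Icc_filter_dvd_one_div_sqrt_le {d : ℕ} (hd : 0 < d) (N : ℕ) :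
    ∑ k ∈ Icc 1 N with d ∣ k, 1 / √(k : ℝ) ≤ 2 * √N / d := by
  have hd' : (0 : ℝ) < d := by exact_mod_cast hd
  rw [Icc_filter_dvd_eq_image hd, sum_image fun _ _ _ _ h => Nat.eq_of_mul_eq_mul_left hd h]
  calc ∑ m ∈ Icc 1 (N / d), 1 / √((d * m : ℕ) : ℝ)
      = 1 / √(d : ℝ) * ∑ m ∈ Icc 1 (N / d), 1 / √(m : ℝ) := by
        simp_rw [mul_sum, Nat.cast_mul, sqrt_mul hd'.le, one_div_mul_one_div]
    _ ≤ 1 / √(d : ℝ) * (2 * √((N : ℝ) / d)) := by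
        gcongr
        exact (sum_Icc_one_div_sqrt_le _).trans (by gcongr; exact Nat.cast_div_le)
    _ = 2 * √N / d := by
        rw [sqrt_div' _ hd'.le]
        field_simp
        rw [sq_sqrt hd'.le, mul_comm]

lemma div_totient_eq_sum_powerset_prod {k : ℕ} (hk : k ≠ 0) :
    (k : ℝ) / φ k = ∑ T ∈ k.primeFactors.powerset, ∏ p ∈ T, 1 / ((p : ℝ) - 1) := by
  have hφ : (φ k : ℝ) = k * ∏ p ∈ k.primeFactors, (1 - (p : ℝ)⁻¹) := by
    have := congrArg ((↑) : ℚ → ℝ) (totient_eq_mul_prod_factors k)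
    push_cast at this
    exact this
  rw [hφ, ← prod_one_add, div_mul_cancel_left₀ (Nat.cast_ne_zero.2 hk), ← prod_inv_distrib]
  refine prod_congr rfl fun p hp => ?_
  have : (1 : ℝ) < p := by exact_mod_cast (prime_of_mem_primeFactors hp).one_lt
  have : (p : ℝ) - 1 ≠ 0 := by linarith
  field_simp
  ring

lemma one_div_sqrt_totient_le (k : ℕ) : 1 / √(φ k : ℝ) ≤ ((k : ℝ) / φ k) / √k := by
  rcases (φ k).eq_zero_or_pos with h | h
  · simp [h]
  rw [div_right_comm, div_sqrt, ← sqrt_div_self']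
  gcongr
  exact totient_le k

theorem sum_Icc_one_div_sqrt_totient_le (N : ℕ) :
    ∑ k ∈ Icc 1 N, 1 / √(φ k : ℝ) ≤ 2 * exp 1 * √N := by
  set g : Finset ℕ → ℝ := fun T => ∏ p ∈ T, 1 / ((p : ℝ) - 1) with hg
  have hg_nonneg : ∀ T ∈ (Icc 2 N).powerset, 0 ≤ g T := fun T hT =>
    prod_nonneg fun p hp => by
      have : (2 : ℝ) ≤ p := by exact_mod_cast (mem_Icc.1 (mem_powerset.1 hT hp)).1
      exact div_nonneg zero_le_one (by linarith)
  have hswap : ∀ k T, k ∈ Icc 1 N ∧ T ∈ k.primeFactors.powerset ↔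
      k ∈ {k ∈ Icc 1 N | T ⊆ k.primeFactors} ∧ T ∈ (Icc 2 N).powerset := by
    intro k T
    simp only [mem_filter, mem_powerset, mem_Icc]
    refine ⟨fun ⟨hk, hT⟩ => ⟨⟨hk, hT⟩, fun p hp => ?_⟩, fun h => h.1⟩
    exact mem_Icc.2 ⟨(prime_of_mem_primeFactors (hT hp)).two_le,
      (le_of_mem_primeFactors (hT hp)).trans hk.2⟩
  calc ∑ k ∈ Icc 1 N, 1 / √(φ k : ℝ)
      ≤ ∑ k ∈ Icc 1 N, ∑ T ∈ k.primeFactors.powerset, g T / √k := by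
        refine sum_le_sum fun k hk => ?_
        rw [← sum_div, ← div_totient_eq_sum_powerset_prod (by grind)]
        exact one_div_sqrt_totient_le k
    _ = ∑ T ∈ (Icc 2 N).powerset, ∑ k ∈ Icc 1 N with T ⊆ k.primeFactors, g T / √k :=
        sum_comm' hswap
    _ ≤ ∑ T ∈ (Icc 2 N).powerset, g T * (2 * √N / ∏ p ∈ T, (p : ℝ)) := by
        refine sum_le_sum fun T hT => ?_
        simp_rw [div_eq_mul_one_div (g T), ← mul_sum]
        gcongr
        · exact hg_nonneg T hT
        calc ∑ k ∈ Icc 1 N with T ⊆ k.primeFactors, 1 / √(k : ℝ)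
            ≤ ∑ k ∈ Icc 1 N with ∏ p ∈ T, p ∣ k, 1 / √(k : ℝ) := by
              refine sum_le_sum_of_subset_of_nonneg (monotone_filter_right _ fun k _ hT => ?_)
                fun _ _ _ => by positivity
              exact (prod_dvd_prod_of_subset _ _ _ hT).trans (prod_primeFactors_dvd k)
          _ ≤ 2 * √N / ∏ p ∈ T, (p : ℝ) := by
              have := sum_Icc_filter_dvd_one_div_sqrt_le (d := ∏ p ∈ T, p)
                (prod_pos fun p hp => two_pos.trans_le (mem_Icc.1 (mem_powerset.1 hT hp)).1) N
              rwa [Nat.cast_prod] at this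
    _ = 2 * √N * ∏ n ∈ Icc 2 N, (1 + 1 / (((n : ℝ) - 1) * n)) := by
        rw [prod_one_add, mul_sum]
        refine sum_congr rfl fun T _ => ?_
        simp only [hg, ← one_div_mul_one_div, prod_mul_distrib, prod_div_distrib, prod_const_one]
        ring
    _ ≤ 2 * √N * exp 1 := by
        gcongr
        refine (prod_one_add_le_exp_sum _ fun n => ?_).trans
          (exp_le_exp.2 (sum_Icc_one_div_sub_one_mul_self_le_one N))
        rcases n with _ | n
        · simp
        · simp only [Nat.cast_succ, add_sub_cancel_right]; positivity
    _ = 2 * exp 1 * √N := by ring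

lemma integral_one_div_log_le {x : ℝ} (hx : 2 ≤ x) : ∫ t in (2 : ℝ)..x, 1 / log t ≤ 2 * x := by
  have hbound : ∀ t ∈ Set.uIoc (2 : ℝ) x, ‖1 / log t‖ ≤ 2 := by
    intro t ht
    rw [Set.uIoc_of_le hx] at ht
    have hlog : 1 / 2 < log t :=
      (log_two_gt_d9.trans_le' (by norm_num)).trans_le (log_le_log two_pos ht.1.le)
    rw [norm_of_nonneg (by positivity), div_le_iff₀ (by positivity)]
    linarith
  have := intervalIntegral.norm_integral_le_of_norm_le_const hbound
  rw [abs_of_nonneg (by linarith : 0 ≤ x - 2)] at this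
  linarith [le_norm_self (∫ t in (2 : ℝ)..x, 1 / log t)]

theorem sum_sqrt_li_div_totient_le_general (a : ℝ) :
    ∃ C > (0:ℝ), ∃ x₀ > (2:ℝ), ∀ x ≥ x₀,
      (∑ k ∈ Finset.Icc 1 ⌊x ^ a⌋₊,
          Real.sqrt ((∫ t in (2:ℝ)..x, 1 / Real.log t) / (Nat.totient k : ℝ))) ≤
        C * x ^ ((a + 1) / 2) := by
  refine ⟨2 * √2 * exp 1, by positivity, 3, by norm_num, fun x hx => ?_⟩
  have hx0 : 0 < x := by linarith
  have hpow : x ^ ((a + 1) / 2) = √x * √(x ^ a) := by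
    rw [sqrt_eq_rpow, sqrt_eq_rpow, ← rpow_mul hx0.le, ← rpow_add hx0]
    ring_nf
  calc ∑ k ∈ Icc 1 ⌊x ^ a⌋₊, √((∫ t in (2 : ℝ)..x, 1 / log t) / φ k)
      = √(∫ t in (2 : ℝ)..x, 1 / log t) * ∑ k ∈ Icc 1 ⌊x ^ a⌋₊, 1 / √(φ k : ℝ) := by
        simp_rw [mul_sum, sqrt_div' _ (Nat.cast_nonneg _), mul_one_div]
    _ ≤ √(2 * x) * (2 * exp 1 * √(x ^ a)) := by
        gcongr
        · exact integral_one_div_log_le (by linarith)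
        · exact (sum_Icc_one_div_sqrt_totient_le _).trans
            (by gcongr; exact Nat.floor_le (rpow_nonneg hx0.le a))
    _ = 2 * √2 * exp 1 * x ^ ((a + 1) / 2) := by
        rw [hpow, sqrt_mul zero_le_two]
        ring

theorem sum_sqrt_li_div_totient_le (a : ℝ) (ha0 : 0 < a) (ha1 : a < 1) :
    ∃ C > (0:ℝ), ∃ x₀ > (2:ℝ), ∀ x ≥ x₀,
      (∑ k ∈ Finset.Icc 1 ⌊x ^ a⌋₊,
          Real.sqrt ((∫ t in (2:ℝ)..x, 1 / Real.log t) / (Nat.totient k : ℝ))) ≤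
        C * x ^ ((a + 1) / 2) :=
  sum_sqrt_li_div_totient_le_general a
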